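/- Let (Ω, ℱ, P) be a probability space and 𝒳 a real Banach space. Along a filter l on an index type, suppose for each index ι one is given n(ι) ∈ ℕ, a filtration 𝒢^ι_0 ⊆ … ⊆ 𝒢^ι_{n(ι)} ⊆ ℱ, Bochner-integrable 𝒳-valued random variables χ^ι_1, …, χ^ι_{n(ι)} with χ^ι_i measurable with respect to 𝒢^ι_i, and a positive real r(ι). Then: (a) if for every η > 0, P( ∑_{i=1}^{n(ι)} E[‖χ^ι_i‖ | 𝒢^ι_{i−1}] > η · r(ι) ) → 0 along l, then for every η > 0, P( ‖∑_{i=1}^{n(ι)} χ^ι_i‖ > η · r(ι) ) → 0 along l; (b) if lim_{M→∞} sup_ι P( ∑_{i=1}^{n(ι)} E[‖χ^ι_i‖ | 𝒢^ι_{i−1}] > M · r(ι) ) = 0, then lim_{M→∞} sup_ι P( ‖∑_{i=1}^{n(ι)} χ^ι_i‖ > M · r(ι) ) = 0. -/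

import Mathlib

/-!
With `A m = ∑_{k ≤ m} E[‖χ k‖ | G (k-1)]`, the events `E k = {A k ≤ d}` are `G (k-1)`-measurable,
so the truncated sum `T = ∑ k, 1_{E k} ‖χ k‖` satisfies
`E T = E ∑ k, 1_{E k} E[‖χ k‖ | G (k-1)] ≤ d`, the last sum being a partial sum of the
increments of `A` that stays below `d`. Off `{A n > d}` every `E k` holds, so `‖∑ χ k‖ ≤ T` there,
and Markov's inequality gives the Lenglart-type bound
`P (‖∑ χ k‖ > c) ≤ P (A n > d) + d / c`.
Take `c = η r` and `d = δ c`: the error term is then `δ`, and the hypothesis controls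
`P (A n > δ η r)` for fixed `δ > 0`, either as `ι` runs along `l` or uniformly as `η → ∞`.
-/

open MeasureTheory Filter Finset Topology
open scoped ENNReal

lemma sum_ite_partialSum_le {a : ℕ → ℝ} (ha : ∀ j, 0 ≤ a j) {d : ℝ} (hd : 0 ≤ d) (n : ℕ) :
    ∑ k ∈ Icc 1 n, (if ∑ j ∈ Icc 1 k, a j ≤ d then a k else 0) ≤ d := by
  induction n with
  | zero => simpa using hd
  | succ n ih =>
    rw [sum_Icc_succ_top (Nat.le_add_left 1 n)]
    split_ifs with h
    · calc _ ≤ ∑ k ∈ Icc 1 n, a k + a (n + 1) := by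
            gcongr with k
            split_ifs
            exacts [le_rfl, ha k]
        _ = ∑ j ∈ Icc 1 (n + 1), a j := (sum_Icc_succ_top (Nat.le_add_left 1 n) a).symm
        _ ≤ d := h
    · simpa using ih

lemma meas_ge_le_ofReal_integral_div {α : Type*} {m : MeasurableSpace α} {μ : Measure α}
    [IsFiniteMeasure μ] {f : α → ℝ} (hf0 : 0 ≤ᵐ[μ] f) (hf : Integrable f μ) {c : ℝ}
    (hc : 0 < c) : μ {x | c ≤ f x} ≤ ENNReal.ofReal ((∫ x, f x ∂μ) / c) := by
  rw [← ofReal_measureReal]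
  refine ENNReal.ofReal_le_ofReal ?_
  rw [le_div_iff₀ hc, mul_comm]
  exact mul_meas_ge_le_integral_of_nonneg hf0 hf c

lemma tendsto_zero_of_le_add_ofReal {α : Type*} {L : Filter α} {f : α → ℝ≥0∞}
    {g : ℝ → α → ℝ≥0∞} (hg : ∀ δ > 0, Tendsto (g δ) L (𝓝 0))
    (hfg : ∀ δ > 0, ∀ᶠ x in L, f x ≤ g δ x + ENNReal.ofReal δ) : Tendsto f L (𝓝 0) := by
  refine ENNReal.tendsto_nhds_zero.2 fun ε hε => ?_
  have hε2 : 0 < ε / 2 := ENNReal.half_pos hε.ne'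
  obtain ⟨δ, -, hδ0, hδε⟩ := ENNReal.lt_iff_exists_real_btwn.1 hε2
  have hδ : 0 < δ := ENNReal.ofReal_pos.1 hδ0
  filter_upwards [hfg δ hδ, ENNReal.tendsto_nhds_zero.1 (hg δ hδ) _ hε2] with x hfx hgx
  calc f x ≤ g δ x + ENNReal.ofReal δ := hfx
    _ ≤ ε / 2 + ε / 2 := add_le_add hgx hδε.le
    _ = ε := ENNReal.add_halves ε

section Lenglart

variable {Ω X : Type*} [NormedAddCommGroup X] {m0 : MeasurableSpace Ω} {P : Measure Ω}
  [IsProbabilityMeasure P] {G : ℕ → MeasurableSpace Ω} {χ : ℕ → Ω → X} {n : ℕ}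

lemma integral_sum_indicator_norm_eq_condExp (hGle : ∀ k, G k ≤ m0)
    (hint : ∀ k ∈ Icc 1 n, Integrable (χ k) P) {E : ℕ → Set Ω}
    (hE : ∀ k, MeasurableSet[G (k - 1)] (E k)) :
    ∫ ω, ∑ k ∈ Icc 1 n, (E k).indicator (fun ω' => ‖χ k ω'‖) ω ∂P =
      ∫ ω, ∑ k ∈ Icc 1 n, (E k).indicator (P[fun ω' => ‖χ k ω'‖|G (k - 1)]) ω ∂P := by
  have hE0 k : MeasurableSet (E k) := hGle _ _ (hE k)
  rw [integral_finsetSum _ fun k hk => (hint k hk).norm.indicator (hE0 k),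
    integral_finsetSum _ fun k _ => integrable_condExp.indicator (hE0 k)]
  refine sum_congr rfl fun k hk => ?_
  rw [integral_indicator (hE0 k), integral_indicator (hE0 k),
    setIntegral_condExp (hGle _) (hint k hk).norm (hE k)]

theorem measure_lt_norm_sum_le (hGmono : Monotone G) (hGle : ∀ k, G k ≤ m0)
    (hint : ∀ k ∈ Icc 1 n, Integrable (χ k) P) {c δ : ℝ} (hc : 0 < c) (hδ : 0 ≤ δ) :
    P {ω | c < ‖∑ k ∈ Icc 1 n, χ k ω‖} ≤
      P {ω | δ * c < ∑ k ∈ Icc 1 n, (P[fun ω' => ‖χ k ω'‖|G (k - 1)]) ω} +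
        ENNReal.ofReal δ := by
  set a : ℕ → Ω → ℝ := fun k => P[fun ω' => ‖χ k ω'‖|G (k - 1)]
  set A : ℕ → Ω → ℝ := fun m ω => ∑ j ∈ Icc 1 m, a j ω
  set E : ℕ → Set Ω := fun k => {ω | A k ω ≤ δ * c}
  set T : Ω → ℝ := fun ω => ∑ k ∈ Icc 1 n, (E k).indicator (fun ω' => ‖χ k ω'‖) ω
  have ha : ∀ᵐ ω ∂P, ∀ j, 0 ≤ a j ω :=
    ae_all_iff.2 fun j => condExp_nonneg (.of_forall fun _ => norm_nonneg _)
  have hE k : MeasurableSet[G (k - 1)] (E k) := by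
    refine measurableSet_le (Finset.stronglyMeasurable_fun_sum _ fun j hj => ?_).measurable
      measurable_const
    exact stronglyMeasurable_condExp.mono (hGmono (Nat.sub_le_sub_right (mem_Icc.1 hj).2 1))
  have hT : ∫ ω, T ω ∂P ≤ δ * c := by
    rw [integral_sum_indicator_norm_eq_condExp hGle hint hE]
    calc _ ≤ ∫ _, δ * c ∂P := by
          refine integral_mono_ae (integrable_finsetSum _ fun k _ =>
            integrable_condExp.indicator (hGle _ _ (hE k))) (integrable_const _) ?_
          filter_upwards [ha] with ω hω
          simpa [E, A, Set.indicator_apply] using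
            sum_ite_partialSum_le hω (mul_nonneg hδ hc.le) n
      _ = δ * c := by simp
  have hMarkov : P {ω | c ≤ T ω} ≤ ENNReal.ofReal δ := by
    have hT0 : 0 ≤ᵐ[P] T := .of_forall fun ω =>
      sum_nonneg fun k _ => Set.indicator_nonneg (fun _ _ => norm_nonneg _) ω
    have hTint : Integrable T P := integrable_finsetSum _ fun k hk =>
      (hint k hk).norm.indicator (hGle _ _ (hE k))
    refine (meas_ge_le_ofReal_integral_div hT0 hTint hc).trans (ENNReal.ofReal_le_ofReal ?_)
    rwa [div_le_iff₀ hc]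
  have hsub : ∀ᵐ ω ∂P, c < ‖∑ k ∈ Icc 1 n, χ k ω‖ → δ * c < A n ω ∨ c ≤ T ω := by
    filter_upwards [ha] with ω hω hω_norm
    refine or_iff_not_imp_left.2 fun hAn => ?_
    have hTω : T ω = ∑ k ∈ Icc 1 n, ‖χ k ω‖ := sum_congr rfl fun k hk =>
      Set.indicator_of_mem (s := E k) ((sum_le_sum_of_subset_of_nonneg (Icc_subset_Icc_right
        (mem_Icc.1 hk).2) fun j _ _ => hω j).trans (not_lt.1 hAn)) _
    rw [hTω]
    exact (hω_norm.trans_le (norm_sum_le _ _)).le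
  calc _ ≤ P ({ω | δ * c < A n ω} ∪ {ω | c ≤ T ω}) := measure_mono_ae hsub
    _ ≤ _ := (measure_union_le _ _).trans (by gcongr)

end Lenglart

theorem stmt_6_general {Ω X ι : Type*} [NormedAddCommGroup X]
    {m0 : MeasurableSpace Ω} (P : Measure Ω) [IsProbabilityMeasure P]
    (l : Filter ι) (n : ι → ℕ) (G : ι → ℕ → MeasurableSpace Ω)
    (hGmono : ∀ i, Monotone (G i)) (hGle : ∀ i k, G i k ≤ m0)
    (χ : ι → ℕ → Ω → X)
    (hint : ∀ i, ∀ k ∈ Finset.Icc 1 (n i), Integrable (χ i k) P)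
    (r : ι → ℝ) (hr : ∀ i, 0 < r i) :
    ((∀ η : ℝ, 0 < η → Filter.Tendsto
        (fun i => P {ω | η * r i <
          ∑ k ∈ Finset.Icc 1 (n i), (P[fun ω' => ‖χ i k ω'‖|G i (k - 1)]) ω})
        l (nhds 0)) →
      ∀ η : ℝ, 0 < η → Filter.Tendsto
        (fun i => P {ω | η * r i < ‖∑ k ∈ Finset.Icc 1 (n i), χ i k ω‖}) l (nhds 0)) ∧
    (Filter.Tendsto
        (fun M : ℝ => ⨆ i, P {ω | M * r i <
          ∑ k ∈ Finset.Icc 1 (n i), (P[fun ω' => ‖χ i k ω'‖|G i (k - 1)]) ω})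
        Filter.atTop (nhds 0) →
      Filter.Tendsto
        (fun M : ℝ => ⨆ i, P {ω | M * r i < ‖∑ k ∈ Finset.Icc 1 (n i), χ i k ω‖})
        Filter.atTop (nhds 0)) := by
  have hbound (i : ι) {η δ : ℝ} (hη : 0 < η) (hδ : 0 ≤ δ) :
      P {ω | η * r i < ‖∑ k ∈ Icc 1 (n i), χ i k ω‖} ≤
        P {ω | δ * η * r i < ∑ k ∈ Icc 1 (n i), (P[fun ω' => ‖χ i k ω'‖|G i (k - 1)]) ω} +
          ENNReal.ofReal δ := by
    simpa only [mul_assoc] using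
      measure_lt_norm_sum_le (hGmono i) (hGle i) (hint i) (mul_pos hη (hr i)) hδ
  refine ⟨fun h η hη => tendsto_zero_of_le_add_ofReal (fun δ hδ => h _ (mul_pos hδ hη))
    fun δ hδ => .of_forall fun i => hbound i hη hδ.le, fun h => ?_⟩
  refine tendsto_zero_of_le_add_ofReal
    (fun δ hδ => h.comp (tendsto_id.const_mul_atTop hδ)) fun δ hδ => ?_
  filter_upwards [eventually_gt_atTop 0] with M hM
  exact iSup_le fun i => (hbound i hM hδ.le).trans (by gcongr; exact le_iSup_of_le i le_rfl)

/-- Remark after Lemma A.3: `o_p(r)` and `O_p(r)` transfer from the conditional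
sums to the Banach-space-valued sums. -/
theorem stmt_6 {Ω X ι : Type*} [NormedAddCommGroup X] [NormedSpace ℝ X]
    {m0 : MeasurableSpace Ω} (P : Measure Ω) [IsProbabilityMeasure P]
    (l : Filter ι) (n : ι → ℕ) (G : ι → ℕ → MeasurableSpace Ω)
    (hGmono : ∀ i, Monotone (G i)) (hGle : ∀ i k, G i k ≤ m0)
    (χ : ι → ℕ → Ω → X)
    (hint : ∀ i, ∀ k ∈ Finset.Icc 1 (n i), Integrable (χ i k) P)
    (hmeas : ∀ i, ∀ k ∈ Finset.Icc 1 (n i), StronglyMeasurable[G i k] (χ i k))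
    (r : ι → ℝ) (hr : ∀ i, 0 < r i) :
    ((∀ η : ℝ, 0 < η → Filter.Tendsto
        (fun i => P {ω | η * r i <
          ∑ k ∈ Finset.Icc 1 (n i), (P[fun ω' => ‖χ i k ω'‖|G i (k - 1)]) ω})
        l (nhds 0)) →
      ∀ η : ℝ, 0 < η → Filter.Tendsto
        (fun i => P {ω | η * r i < ‖∑ k ∈ Finset.Icc 1 (n i), χ i k ω‖}) l (nhds 0)) ∧
    (Filter.Tendsto
        (fun M : ℝ => ⨆ i, P {ω | M * r i <
          ∑ k ∈ Finset.Icc 1 (n i), (P[fun ω' => ‖χ i k ω'‖|G i (k - 1)]) ω})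
        Filter.atTop (nhds 0) →
      Filter.Tendsto
        (fun M : ℝ => ⨆ i, P {ω | M * r i < ‖∑ k ∈ Finset.Icc 1 (n i), χ i k ω‖})
        Filter.atTop (nhds 0)) :=
  stmt_6_general P l n G hGmono hGle χ hint r hr
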